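/- Let X be a real inner product space. Then for all x, y ∈ X \ {0}, one has ‖x/‖x‖ − y/‖y‖‖ ≤ 2‖x−y‖/(‖x‖+‖y‖); in particular, if X is nontrivial, DW(X) = 2. -/

import Mathlib

/-!
For unit vectors `u = x/‖x‖`, `v = y/‖y‖` one has
`2 (x - y) = (‖x‖ + ‖y‖) (u - v) + (‖x‖ - ‖y‖) (u + v)`, and `u - v ⟂ u + v` because
`‖u‖ = ‖v‖`. Pythagoras then gives `4 ‖x - y‖² ≥ (‖x‖ + ‖y‖)² ‖u - v‖²`, with equality for
`y = -x`, so `DW(X) = 2`.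
-/

open RealInnerProductSpace

section

variable {E : Type*} [NormedAddCommGroup E] [InnerProductSpace ℝ E]

theorem four_mul_norm_smul_sub_smul_sq {u v : E} (huv : ‖u‖ = ‖v‖) (a b : ℝ) :
    4 * ‖a • u - b • v‖ ^ 2 = (a + b) ^ 2 * ‖u - v‖ ^ 2 + (a - b) ^ 2 * ‖u + v‖ ^ 2 := by
  have hdecomp : (2 : ℝ) • (a • u - b • v) = (a + b) • (u - v) + (a - b) • (u + v) := by
    simp only [smul_sub, smul_add, add_smul, sub_smul, two_smul]
    abel
  have horth : ⟪(a + b) • (u - v), (a - b) • (u + v)⟫ = 0 := by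
    rw [real_inner_smul_left, real_inner_smul_right, real_inner_comm,
      (real_inner_add_sub_eq_zero_iff u v).2 huv, mul_zero, mul_zero]
  have hsq := norm_add_sq_eq_norm_sq_add_norm_sq_real horth
  rw [← hdecomp] at hsq
  simp only [norm_smul, Real.norm_eq_abs, mul_mul_mul_comm, abs_mul_abs_self, abs_two] at hsq
  linear_combination hsq

theorem abs_add_mul_norm_sub_le {u v : E} (huv : ‖u‖ = ‖v‖) (a b : ℝ) :
    |a + b| * ‖u - v‖ ≤ 2 * ‖a • u - b • v‖ := by
  refine (pow_le_pow_iff_left₀ (by positivity) (by positivity) two_ne_zero).1 ?_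
  have := four_mul_norm_smul_sub_smul_sq huv a b
  rw [mul_pow, mul_pow, sq_abs]
  nlinarith [sq_nonneg (a - b), sq_nonneg ‖u + v‖]

theorem norm_inv_norm_smul_sub_le {x y : E} (hx : x ≠ 0) (hy : y ≠ 0) :
    ‖‖x‖⁻¹ • x - ‖y‖⁻¹ • y‖ ≤ 2 * ‖x - y‖ / (‖x‖ + ‖y‖) := by
  have hsum : 0 < ‖x‖ + ‖y‖ := by positivity
  have hunit : ‖‖x‖⁻¹ • x‖ = ‖‖y‖⁻¹ • y‖ :=
    (norm_smul_inv_norm (𝕜 := ℝ) hx).trans (norm_smul_inv_norm (𝕜 := ℝ) hy).symm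
  have := abs_add_mul_norm_sub_le hunit ‖x‖ ‖y‖
  rw [smul_inv_smul₀ (norm_ne_zero_iff.2 hx), smul_inv_smul₀ (norm_ne_zero_iff.2 hy),
    abs_of_pos hsum] at this
  rw [le_div_iff₀ hsum]
  linarith

/-- `DW(E)` is the supremum of this ratio over distinct nonzero `x, y`. -/
noncomputable def dunklWilliamsRatio (x y : E) : ℝ :=
  (‖x‖ + ‖y‖) / ‖x - y‖ * ‖‖x‖⁻¹ • x - ‖y‖⁻¹ • y‖

theorem dunklWilliamsRatio_le_two {x y : E} (hx : x ≠ 0) (hy : y ≠ 0) :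
    dunklWilliamsRatio x y ≤ 2 := by
  have hsum : 0 < ‖x‖ + ‖y‖ := by positivity
  rw [dunklWilliamsRatio, div_mul_eq_mul_div]
  refine div_le_of_le_mul₀ (norm_nonneg _) zero_le_two ?_
  have := norm_inv_norm_smul_sub_le hx hy
  rw [le_div_iff₀ hsum] at this
  linarith

theorem dunklWilliamsRatio_neg_right {x : E} (hx : x ≠ 0) : dunklWilliamsRatio x (-x) = 2 := by
  have hnx : ‖x‖ ≠ 0 := norm_ne_zero_iff.2 hx
  rw [dunklWilliamsRatio, norm_neg, sub_neg_eq_add, smul_neg, sub_neg_eq_add, ← two_smul ℝ x,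
    ← two_smul ℝ (‖x‖⁻¹ • x), norm_smul, norm_smul, norm_smul, norm_inv, norm_norm]
  field_simp
  norm_num

end

/-- In a real inner product space, `‖x/‖x‖ − y/‖y‖‖ ≤ 2‖x−y‖/(‖x‖+‖y‖)` for all
nonzero `x, y`; in particular, if the space is nontrivial, `DW(X) = 2`. -/
theorem dunkl_williams_inner_product {X : Type*} [NormedAddCommGroup X]
    [InnerProductSpace ℝ X] :
    (∀ x y : X, x ≠ 0 → y ≠ 0 →
      ‖‖x‖⁻¹ • x - ‖y‖⁻¹ • y‖ ≤ 2 * ‖x - y‖ / (‖x‖ + ‖y‖)) ∧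
    (Nontrivial X →
      sSup {c : ℝ | ∃ x y : X, x ≠ 0 ∧ y ≠ 0 ∧ x ≠ y ∧
        c = (‖x‖ + ‖y‖) / ‖x - y‖ * ‖‖x‖⁻¹ • x - ‖y‖⁻¹ • y‖} = 2) := by
  refine ⟨fun x y hx hy => norm_inv_norm_smul_sub_le hx hy, fun _ => ?_⟩
  obtain ⟨x, hx⟩ := exists_ne (0 : X)
  have := IsAddTorsionFree.of_isTorsionFree ℝ X
  refine IsGreatest.csSup_eq ⟨⟨x, -x, hx, neg_ne_zero.2 hx, self_ne_neg.2 hx,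
    (dunklWilliamsRatio_neg_right hx).symm⟩, ?_⟩
  rintro c ⟨x, y, hx, hy, -, rfl⟩
  exact dunklWilliamsRatio_le_two hx hy
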